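/- For every natural number n, the polynomial identity (z-1) dP_n(z)/dz = n P_n(z) + Σ_{k=0}^{n-1} (-1)^{n+k} (2k+1) P_k(z) holds (as an identity of polynomials in z, equivalently for all real z). -/

import Mathlib

/-!
Write `P_n(z) = 2⁻ⁿ F_n(z - 1, z + 1)` with `F_n(a, b) = ∑ₖ C(n,k)² aⁿ⁻ᵏ bᵏ`, homogeneous of
degree `n`. Euler's identity `a ∂ₐF_n + b ∂_bF_n = n F_n` gives `(z - 1) P_n' = n P_n - R_n` with
`R_n = 2¹⁻ⁿ ∂_bF_n(z - 1, z + 1)`. Comparing coefficients, `∂_bF_{n+1} + (b - a) ∂_bF_n = (2n + 1) F_n`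
reduces to an identity between squares of binomial coefficients; since `b - a = 2` this reads
`R_{n+1} + R_n = (2n + 1) P_n`, and unrolling it from `R_0 = 0` gives the alternating sum.
-/

/-- The Legendre polynomial of degree `n`,
`P_n(z) = 2^{-n} ∑_{k=0}^{n} (binom(n,k))² (z-1)^{n-k} (z+1)^k`, as a function on `ℝ`. -/
noncomputable def P (n : ℕ) (z : ℝ) : ℝ :=
  (∑ k ∈ Finset.range (n + 1), ((n.choose k : ℝ)) ^ 2 * (z - 1) ^ (n - k) * (z + 1) ^ k) / 2 ^ n

open Finset

theorem natCast_mul_pow_pred_mul {R : Type*} [Semiring R] (k : ℕ) (x : R) :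
    (k : R) * x ^ (k - 1) * x = k * x ^ k := by
  cases k with
  | zero => simp
  | succ m => rw [Nat.add_sub_cancel, mul_assoc, ← pow_succ]

theorem neg_eq_sum_range_of_succ_add_eq {M : Type*} [Ring M] {r c : ℕ → M} (h0 : r 0 = 0)
    (h : ∀ n, r (n + 1) + r n = c n) (n : ℕ) :
    -r n = ∑ k ∈ range n, (-1) ^ (n + k) * c k := by
  induction n with
  | zero => simp [h0]
  | succ n ih =>
    have hsucc : -r (n + 1) = -(-r n) - c n := by rw [← h n]; abel
    have hn : (-1 : M) ^ (n + 1 + n) = -1 := by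
      rw [show n + 1 + n = 2 * n + 1 by ring, pow_succ, pow_mul]; simp
    rw [hsucc, ih, sum_range_succ, hn, ← sum_neg_distrib]
    simp only [add_right_comm n 1, pow_succ, mul_neg_one, neg_mul, one_mul, sub_eq_add_neg]

theorem Nat.succ_mul_choose_succ_succ_sq_add (n k : ℕ) :
    (k + 1) * (n + 1).choose (k + 1) ^ 2 + k * n.choose k ^ 2
      = (k + 1) * n.choose (k + 1) ^ 2 + (2 * n + 1) * n.choose k ^ 2 := by
  have hs := Nat.choose_succ_right_eq n k
  rw [Nat.choose_succ_succ]
  rcases le_or_gt k n with hk | hk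
  · obtain ⟨m, rfl⟩ := Nat.exists_eq_add_of_le hk
    rw [Nat.add_sub_cancel_left] at hs
    nlinarith [hs]
  · simp [Nat.choose_eq_zero_of_lt hk, Nat.choose_eq_zero_of_lt (Nat.lt_succ_of_lt hk)]

section LegendreForm

variable {R : Type*}

section CommSemiring

variable [CommSemiring R]

def legendreForm (n : ℕ) (a b : R) : R :=
  ∑ k ∈ range (n + 1), (n.choose k : R) ^ 2 * a ^ (n - k) * b ^ k

/- In the exponents `n - k - 1` and `k - 1`, truncated subtraction only matters in terms whose
coefficient `n - k`, resp. `k`, vanishes. -/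
def legendreFormDerivFst (n : ℕ) (a b : R) : R :=
  ∑ k ∈ range (n + 1), (n.choose k : R) ^ 2 * ((n - k : ℕ) : R) * a ^ (n - k - 1) * b ^ k

def legendreFormDerivSnd (n : ℕ) (a b : R) : R :=
  ∑ k ∈ range (n + 1), (n.choose k : R) ^ 2 * (k : R) * a ^ (n - k) * b ^ (k - 1)

theorem legendreForm_euler (n : ℕ) (a b : R) :
    a * legendreFormDerivFst n a b + b * legendreFormDerivSnd n a b = n * legendreForm n a b := by
  simp only [legendreForm, legendreFormDerivFst, legendreFormDerivSnd, mul_sum, ← sum_add_distrib]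
  refine sum_congr rfl fun k hk => ?_
  have hn : ((n - k : ℕ) : R) + k = n := by
    rw [← Nat.cast_add, Nat.sub_add_cancel (Nat.lt_succ_iff.mp (mem_range.mp hk))]
  calc _ = (n.choose k : R) ^ 2 * (b ^ k * (((n - k : ℕ) : R) * a ^ (n - k - 1) * a)
          + a ^ (n - k) * ((k : R) * b ^ (k - 1) * b)) := by ring
    _ = _ := by rw [natCast_mul_pow_pred_mul, natCast_mul_pow_pred_mul, ← hn]; ring

theorem legendreFormDerivSnd_succ (n : ℕ) (a b : R) :
    legendreFormDerivSnd (n + 1) a b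
      = ∑ k ∈ range (n + 1), ((n + 1).choose (k + 1) : R) ^ 2 * (k + 1) * a ^ (n - k) * b ^ k := by
  rw [legendreFormDerivSnd, sum_range_succ']
  simp [Nat.add_sub_add_right]

theorem snd_mul_legendreFormDerivSnd (n : ℕ) (a b : R) :
    b * legendreFormDerivSnd n a b
      = ∑ k ∈ range (n + 1), (n.choose k : R) ^ 2 * k * a ^ (n - k) * b ^ k := by
  rw [legendreFormDerivSnd, mul_sum]
  refine sum_congr rfl fun k _ => ?_
  calc _ = (n.choose k : R) ^ 2 * a ^ (n - k) * ((k : R) * b ^ (k - 1) * b) := by ring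
    _ = _ := by rw [natCast_mul_pow_pred_mul]; ring

theorem fst_mul_legendreFormDerivSnd (n : ℕ) (a b : R) :
    a * legendreFormDerivSnd n a b
      = ∑ k ∈ range (n + 1), (n.choose (k + 1) : R) ^ 2 * (k + 1) * a ^ (n - k) * b ^ k := by
  rw [legendreFormDerivSnd, mul_sum, sum_range_succ', sum_range_succ]
  simp only [Nat.cast_zero, mul_zero, zero_mul, add_zero, Nat.choose_succ_self, zero_pow two_ne_zero]
  refine sum_congr rfl fun k hk => ?_
  have hkn : n - (k + 1) + 1 = n - k := by have := mem_range.mp hk; omega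
  rw [Nat.add_sub_cancel, ← hkn]
  push_cast
  ring

end CommSemiring

theorem legendreFormDerivSnd_succ_add [CommRing R] (n : ℕ) (a b : R) :
    legendreFormDerivSnd (n + 1) a b + (b - a) * legendreFormDerivSnd n a b
      = (2 * n + 1) * legendreForm n a b := by
  rw [sub_mul, legendreFormDerivSnd_succ, snd_mul_legendreFormDerivSnd, fst_mul_legendreFormDerivSnd,
    legendreForm, mul_sum, ← sum_sub_distrib, ← sum_add_distrib]
  refine sum_congr rfl fun k _ => ?_
  have h := congrArg (Nat.cast : ℕ → R) (Nat.succ_mul_choose_succ_succ_sq_add n k)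
  push_cast at h
  linear_combination a ^ (n - k) * b ^ k * h

end LegendreForm

theorem HasDerivAt.legendreForm {𝕜 : Type*} [NontriviallyNormedField 𝕜] {f g : 𝕜 → 𝕜}
    {f' g' x : 𝕜} (hf : HasDerivAt f f' x) (hg : HasDerivAt g g' x) (n : ℕ) :
    HasDerivAt (fun x => legendreForm n (f x) (g x))
      (f' * legendreFormDerivFst n (f x) (g x) + g' * legendreFormDerivSnd n (f x) (g x)) x := by
  unfold _root_.legendreForm legendreFormDerivFst legendreFormDerivSnd
  refine (HasDerivAt.fun_sum fun k _ => ((hf.fun_pow (n - k)).const_mul _).fun_mul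
    (hg.fun_pow k)).congr_deriv ?_
  simp only [mul_sum, ← sum_add_distrib]
  exact sum_congr rfl fun k _ => by ring

theorem P_eq_legendreForm (n : ℕ) : P n = fun z => legendreForm n (z - 1) (z + 1) / 2 ^ n := rfl

theorem sub_one_mul_deriv_P (n : ℕ) (z : ℝ) :
    (z - 1) * deriv (P n) z
      = n * P n z - 2 * legendreFormDerivSnd n (z - 1) (z + 1) / 2 ^ n := by
  have hd := (((hasDerivAt_id' z).sub_const 1).legendreForm
    ((hasDerivAt_id' z).add_const 1) n).div_const (2 ^ n)
  rw [P_eq_legendreForm, hd.deriv]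
  linear_combination legendreForm_euler n (z - 1) (z + 1) / 2 ^ n

/-- For every natural number `n` and all real `z`,
`(z-1) P_n'(z) = n P_n(z) + ∑_{k=0}^{n-1} (-1)^{n+k} (2k+1) P_k(z)`. -/
theorem legendre_deriv_identity (n : ℕ) (z : ℝ) :
    (z - 1) * deriv (P n) z =
      (n : ℝ) * P n z +
        ∑ k ∈ Finset.range n, (-1 : ℝ) ^ (n + k) * (2 * (k : ℝ) + 1) * P k z := by
  set r : ℕ → ℝ := fun m => 2 * legendreFormDerivSnd m (z - 1) (z + 1) / 2 ^ m
  have hr : ∀ m, r (m + 1) + r m = (2 * m + 1) * P m z := fun m => by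
    have := legendreFormDerivSnd_succ_add m (z - 1) (z + 1)
    simp only [r, P_eq_legendreForm, pow_succ]
    linear_combination this / 2 ^ m
  rw [sub_one_mul_deriv_P, sub_eq_add_neg,
    neg_eq_sum_range_of_succ_add_eq (by simp [r, legendreFormDerivSnd]) hr]
  simp only [mul_assoc]
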